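/- arXiv:2408.14094 — 3 statements merged into one kernel-verified Lean document; each statement's English description precedes it below -/
import Mathlib

section
/- For 0 ≤ k ≤ n, the q-binomial analog ⟨n, k⟩_q (the coefficient of x^{n-k} in f(x)^{k+1}) satisfies ⟨n, k⟩_q = q^{n-k} · ∑_{j=1}^{k+1} C(k+1, j) · ⟨n-k-1, j-1⟩_q whenever k < n, where ⟨m, j⟩_q is interpreted as the coefficient of x^{m-j} in f(x)^{j+1} (zero if m < j). -/
noncomputable def f : PowerSeries (Polynomial ℤ) :=
  PowerSeries.mk fun m => (Polynomial.X : Polynomial ℤ) ^ Nat.choose (m + 1) 2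

/-- `angleZ m j` is the coefficient of `x^(m-j)` in `f^(j+1)`, set to `0` when `j > m`. -/
noncomputable def angleZ (m j : ℕ) : Polynomial ℤ :=
  if j ≤ m then PowerSeries.coeff (m - j) (f ^ (j + 1)) else 0

/-!
Since `(m + 2).choose 2 = (m + 1).choose 2 + (m + 1)`, the series satisfies the functional
equation `f(x) = 1 + q x f(q x)`. Expanding `f^(k+1) = (1 + q x f(q x))^(k+1)` by the binomial
theorem, the `j`-th term contributes `q^d` times the coefficient of `x^(d-j)` in `f^j` to the
coefficient of `x^d` in `f^(k+1)`; for `d = n - k ≥ 1` the term `j = 0` contributes nothing.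
-/

open PowerSeries

section

variable {R : Type*} [CommSemiring R]

theorem PowerSeries.coeff_one_add_pow (c : R⟦X⟧) (m d : ℕ) :
    coeff d ((1 + c) ^ m) = ∑ j ∈ Finset.range (m + 1), (m.choose j : R) * coeff d (c ^ j) := by
  rw [add_comm, add_pow, map_sum]
  refine Finset.sum_congr rfl fun j _ => ?_
  rw [one_pow, mul_one, mul_comm, ← map_natCast (C (R := R)), coeff_C_mul]

theorem PowerSeries.coeff_C_mul_X_mul_rescale_pow (a : R) (g : R⟦X⟧) (j d : ℕ) :
    coeff d ((C a * X * rescale a g) ^ j) =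
      if j ≤ d then a ^ d * coeff (d - j) (g ^ j) else 0 := by
  rw [mul_pow, mul_pow, ← map_pow, ← map_pow, mul_assoc, coeff_C_mul, coeff_X_pow_mul']
  split_ifs with hjd
  · rw [coeff_rescale, ← mul_assoc, ← pow_add, Nat.add_sub_cancel' hjd]
  · rw [mul_zero]

end

theorem f_eq_one_add_X_mul_rescale :
    f = 1 + C Polynomial.X * X * rescale Polynomial.X f := by
  refine PowerSeries.ext fun n => ?_
  rcases n with _ | m
  · simp [f]
  · have hchoose : (m + 2).choose 2 = m + (m + 1).choose 2 + 1 := by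
      simp only [Nat.choose_succ_succ', Nat.choose_zero_right, Nat.choose_one_right, Nat.reduceAdd]
      omega
    rw [map_add, coeff_one, if_neg m.succ_ne_zero, zero_add, mul_assoc, coeff_C_mul,
      coeff_succ_X_mul, coeff_rescale]
    simp only [f, coeff_mk, ← pow_add, ← pow_succ', hchoose]

theorem angleZ_sub_one_sub_one {d j : ℕ} (hd : 1 ≤ d) (hj : 1 ≤ j) :
    angleZ (d - 1) (j - 1) = if j ≤ d then coeff (d - j) (f ^ j) else 0 := by
  rw [angleZ, Nat.sub_add_cancel hj, Nat.sub_sub, Nat.add_sub_cancel' hj]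
  exact if_congr (by omega) rfl rfl

theorem angle_binomial_recursion (n k : ℕ) (hkn : k < n) :
    angleZ n k = (Polynomial.X : Polynomial ℤ) ^ (n - k) *
      ∑ j ∈ Finset.Icc 1 (k + 1),
        ((k + 1).choose j : Polynomial ℤ) * angleZ (n - k - 1) (j - 1) := by
  have hd : 1 ≤ n - k := by omega
  rw [angleZ, if_pos hkn.le]
  nth_rw 1 [f_eq_one_add_X_mul_rescale]
  rw [coeff_one_add_pow, Finset.range_eq_Ico, Finset.sum_eq_sum_Ico_succ_bot (by omega),
    pow_zero, coeff_one, if_neg (by omega), mul_zero, zero_add, Finset.mul_sum]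
  refine Finset.sum_congr (by ext; simp) fun j hj => ?_
  rw [coeff_C_mul_X_mul_rescale_pow, angleZ_sub_one_sub_one hd (Finset.mem_Icc.mp hj).1]
  split_ifs <;> ring
end

section
/- For 0 ≤ k < n, the polynomial ⟨n, k⟩_q (the coefficient of x^{n-k} in f(x)^{k+1}) has degree C(n-k+1, 2) = (n-k)(n-k+1)/2 in q, and its leading coefficient equals k+1. -/
noncomputable def angle (n k : ℕ) : Polynomial ℤ :=
  PowerSeries.coeff (R := Polynomial ℤ) (n - k) (f ^ (k + 1))

open PowerSeries
open scoped Polynomial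

theorem Nat.add_add_one_choose_two (a b : ℕ) :
    (a + b + 1).choose 2 = (a + 1).choose 2 + (b + 1).choose 2 + a * b := by
  qify [Nat.cast_choose_two]
  ring

section Triangular

variable {R : Type*} [Semiring R] {φ ψ : PowerSeries R[X]}

def TriangularlyBounded (φ : PowerSeries R[X]) : Prop :=
  ∀ m, (coeff m φ).natDegree ≤ (m + 1).choose 2

theorem TriangularlyBounded.natDegree_coeff_mul_coeff_le (hφ : TriangularlyBounded φ)
    (hψ : TriangularlyBounded ψ) (a b : ℕ) :
    (coeff a φ * coeff b ψ).natDegree ≤ (a + 1).choose 2 + (b + 1).choose 2 :=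
  Polynomial.natDegree_mul_le.trans (add_le_add (hφ a) (hψ b))

theorem TriangularlyBounded.mul (hφ : TriangularlyBounded φ) (hψ : TriangularlyBounded ψ) :
    TriangularlyBounded (φ * ψ) := by
  intro N
  rw [coeff_mul]
  refine Polynomial.natDegree_sum_le_of_forall_le _ _ fun ⟨a, b⟩ hab => ?_
  rw [Finset.HasAntidiagonal.mem_antidiagonal] at hab
  subst hab
  rw [Nat.add_add_one_choose_two]
  exact (hφ.natDegree_coeff_mul_coeff_le hψ a b).trans (Nat.le_add_right _ _)

theorem triangularlyBounded_one : TriangularlyBounded (1 : PowerSeries R[X]) := by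
  intro m
  rw [PowerSeries.coeff_one]
  split_ifs <;> simp

theorem TriangularlyBounded.pow (hφ : TriangularlyBounded φ) (j : ℕ) :
    TriangularlyBounded (φ ^ j) := by
  induction j with
  | zero => exact triangularlyBounded_one
  | succ j ih => exact pow_succ φ j ▸ ih.mul hφ

/-- Only the two extreme terms of the Cauchy product reach the top degree `C(N + 1, 2)`. -/
theorem TriangularlyBounded.coeff_coeff_mul_choose (hφ : TriangularlyBounded φ)
    (hψ : TriangularlyBounded ψ) {N : ℕ} (hN : N ≠ 0) :
    (coeff N (φ * ψ)).coeff ((N + 1).choose 2) =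
      (coeff N φ).coeff ((N + 1).choose 2) * (coeff 0 ψ).coeff 0 +
        (coeff 0 φ).coeff 0 * (coeff N ψ).coeff ((N + 1).choose 2) := by
  rw [coeff_mul, Polynomial.finsetSum_coeff, Finset.sum_eq_add (N, 0) (0, N) (by simp [hN])]
  · have hφ0 : (coeff 0 φ).natDegree ≤ 0 := hφ 0
    have hψ0 : (coeff 0 ψ).natDegree ≤ 0 := hψ 0
    rw [← Polynomial.coeff_mul_add_eq_of_natDegree_le (hφ N) hψ0,
      ← Polynomial.coeff_mul_add_eq_of_natDegree_le hφ0 (hψ N), add_zero, zero_add]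
  · rintro ⟨a, b⟩ hab ⟨hN0, h0N⟩
    rw [Finset.HasAntidiagonal.mem_antidiagonal] at hab
    subst hab
    dsimp only
    have ha : a ≠ 0 := by rintro rfl; simp at h0N
    have hb : b ≠ 0 := by rintro rfl; simp at hN0
    refine Polynomial.coeff_eq_zero_of_natDegree_lt
      ((hφ.natDegree_coeff_mul_coeff_le hψ a b).trans_lt ?_)
    rw [Nat.add_add_one_choose_two]
    have := Nat.mul_ne_zero ha hb
    omega
  · simp
  · simp

end Triangular

theorem coeff_f (m : ℕ) : coeff m f = Polynomial.X ^ (m + 1).choose 2 := by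
  simp [f]

theorem constantCoeff_f : constantCoeff f = 1 := by
  simp [← coeff_zero_eq_constantCoeff_apply, coeff_f]

theorem coeff_zero_f_pow (j : ℕ) : coeff 0 (f ^ j) = 1 := by
  rw [coeff_zero_eq_constantCoeff_apply, map_pow, constantCoeff_f, one_pow]

theorem triangularlyBounded_f : TriangularlyBounded f := fun m => by
  rw [coeff_f, Polynomial.natDegree_X_pow]

theorem coeff_coeff_f_pow_choose (j : ℕ) {N : ℕ} (hN : N ≠ 0) :
    (coeff N (f ^ j)).coeff ((N + 1).choose 2) = j := by
  induction j with
  | zero => simp [PowerSeries.coeff_one, hN]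
  | succ j ih =>
    rw [pow_succ, (triangularlyBounded_f.pow j).coeff_coeff_mul_choose triangularlyBounded_f hN,
      ih, coeff_zero_f_pow]
    simp [coeff_f]

theorem angle_degree_leadingCoeff (n k : ℕ) (hkn : k < n) :
    (angle n k).natDegree = Nat.choose (n - k + 1) 2 ∧
      (angle n k).leadingCoeff = (k + 1 : ℤ) := by
  have hN : n - k ≠ 0 := by omega
  have htop : (angle n k).coeff ((n - k + 1).choose 2) = (k + 1 : ℤ) := by
    rw [angle, coeff_coeff_f_pow_choose _ hN]
    norm_cast
  have hdeg : (angle n k).natDegree = (n - k + 1).choose 2 :=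
    Polynomial.natDegree_eq_of_le_of_coeff_ne_zero (triangularlyBounded_f.pow (k + 1) (n - k))
      (htop ▸ by positivity)
  exact ⟨hdeg, by rw [Polynomial.leadingCoeff, hdeg, htop]⟩
end

section
/- For integers n ≥ 1 and k ≥ 1, ∑_{λ ∈ P_{n,k}} ∏_{i=1}^{ℓ(λ)-1} C(λ_i, λ_{i+1}) = C(n-1, k-1), where the sum is over all partitions λ = (λ_1, ..., λ_{ℓ}) of n with largest part λ_1 = k. -/
/-!
Removing the largest part `k` from a partition `λ` of `n` leaves a partition `μ` of `n - k` with
all parts `≤ k`, and `coef(λ) = C(k, μ₁) · coef(μ)`. Grouping the `μ` by their largest part `j`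
gives the recursion `S(n, k) = ∑ⱼ C(k, j) S(n - k, j)` for the sums `S(n, k)` of the statement,
and by strong induction on `n` the right side is `∑ⱼ C(k, j) C(n - k - 1, j - 1)`, which is
`C(n - 1, k - 1)` by Vandermonde's identity.
-/

/-- The decreasing list of parts of a partition. -/
def plist {n : ℕ} (p : n.Partition) : List ℕ := p.parts.sort (· ≥ ·)

/-- `coef(λ) = ∏ C(λ_i, λ_{i+1})`. -/
def coefw (l : List ℕ) : ℕ :=
  ∏ i ∈ Finset.range (l.length - 1), (l.getD i 0).choose (l.getD (i + 1) 0)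

open Finset

lemma coe_plist {n : ℕ} (p : n.Partition) : (plist p : Multiset ℕ) = p.parts :=
  Multiset.sort_eq _ _

lemma plist_ne_nil {n : ℕ} (hn : n ≠ 0) (p : n.Partition) : plist p ≠ [] := by
  intro h
  have hsum := p.parts_sum
  rw [← coe_plist, h] at hsum
  exact hn (by simpa using hsum.symm)

lemma head?_plist_eq_some_iff {n k : ℕ} (p : n.Partition) :
    (plist p).head? = some k ↔ k ∈ p.parts ∧ ∀ x ∈ p.parts, x ≤ k := by
  have hsorted : (plist p).Pairwise (· ≥ ·) := Multiset.pairwise_sort _ _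
  simp only [← coe_plist, Multiset.mem_coe] at hsorted ⊢
  cases hl : plist p with
  | nil => simp
  | cons a t =>
    rw [hl, List.pairwise_cons] at hsorted
    simp only [List.head?_cons, Option.some_inj, List.mem_cons, forall_eq_or_imp]
    constructor
    · rintro rfl
      exact ⟨.inl rfl, le_rfl, hsorted.1⟩
    · rintro ⟨rfl | hk, hak, -⟩
      · rfl
      · exact le_antisymm hak (hsorted.1 k hk)

lemma head?_plist_eq_some_headI {n : ℕ} (hn : n ≠ 0) (p : n.Partition) :
    (plist p).head? = some (plist p).headI := by
  cases hl : plist p with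
  | nil => exact absurd hl (plist_ne_nil hn p)
  | cons a t => rfl

lemma plist_partitionWithPartEquiv_symm {n k : ℕ} (hk : 1 ≤ k) (hkn : k ≤ n)
    (q : (n - k).Partition) (hq : ∀ x ∈ q.parts, x ≤ k) :
    plist ((Nat.Partition.partitionWithPartEquiv hk hkn).symm q).1 = k :: plist q := by
  rw [plist, Nat.Partition.partitionWithPartEquiv_symm_apply_parts]
  exact Multiset.sort_cons _ _ _ hq

-- Also for `l = []`, thanks to the junk value `[].headI = 0`.
lemma coefw_cons (a : ℕ) (l : List ℕ) : coefw (a :: l) = a.choose l.headI * coefw l := by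
  cases l with
  | nil => simp [coefw]
  | cons b t =>
    simp only [coefw, List.length_cons, Nat.add_sub_cancel]
    rw [prod_range_succ']
    simp [mul_comm]

def coefSum (n k : ℕ) : ℕ :=
  ∑ p ∈ univ.filter (fun p : n.Partition => (plist p).head? = some k), coefw (plist p)

lemma coefSum_eq_sum_remove_largest {n k : ℕ} (hk : 1 ≤ k) (hkn : k ≤ n) :
    coefSum n k = ∑ q ∈ univ.filter (fun q : (n - k).Partition => ∀ x ∈ q.parts, x ≤ k),
      k.choose (plist q).headI * coefw (plist q) := by
  set e := Nat.Partition.partitionWithPartEquiv hk hkn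
  symm
  refine sum_bij' (fun q _ => (e.symm q).1)
    (fun p hp => e ⟨p, ((head?_plist_eq_some_iff p).1 (mem_filter.1 hp).2).1⟩) ?_ ?_ ?_ ?_ ?_
  · intro q hq
    rw [mem_filter, head?_plist_eq_some_iff, Nat.Partition.partitionWithPartEquiv_symm_apply_parts]
    simpa using (mem_filter.1 hq).2
  · intro p hp
    rw [mem_filter, Nat.Partition.partitionWithPartEquiv_apply_parts]
    exact ⟨mem_univ _, fun x hx =>
      ((head?_plist_eq_some_iff p).1 (mem_filter.1 hp).2).2 x (Multiset.mem_of_mem_erase hx)⟩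
  · intro q _
    simp
  · intro p _
    simp
  · intro q hq
    rw [plist_partitionWithPartEquiv_symm hk hkn q (mem_filter.1 hq).2, coefw_cons]

lemma sum_forall_le_eq_sum_coefSum {m : ℕ} (hm : m ≠ 0) (k : ℕ) :
    ∑ q ∈ univ.filter (fun q : m.Partition => ∀ x ∈ q.parts, x ≤ k),
      k.choose (plist q).headI * coefw (plist q) =
    ∑ j ∈ range (k + 1), k.choose j * coefSum m j := by
  have head?_eq_some_iff (q : m.Partition) (j : ℕ) :
      (plist q).head? = some j ↔ (plist q).headI = j := by
    rw [head?_plist_eq_some_headI hm, Option.some_inj]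
  have headI_largest (q : m.Partition) :=
    (head?_plist_eq_some_iff q).1 (head?_plist_eq_some_headI hm q)
  rw [← sum_fiberwise_of_maps_to (g := fun q => (plist q).headI) (t := range (k + 1))]
  · refine sum_congr rfl fun j hj => ?_
    have hfiber : (univ.filter (fun q : m.Partition => ∀ x ∈ q.parts, x ≤ k)).filter
        (fun q => (plist q).headI = j) = univ.filter (fun q => (plist q).head? = some j) := by
      ext q
      simp only [mem_filter, mem_univ, true_and, head?_eq_some_iff]
      refine ⟨And.right, fun hq => ⟨fun x hx => ?_, hq⟩⟩
      have := (headI_largest q).2 x hx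
      rw [mem_range] at hj
      omega
    rw [hfiber, coefSum, mul_sum]
    refine sum_congr rfl fun q hq => ?_
    rw [(head?_eq_some_iff q j).1 (mem_filter.1 hq).2]
  · intro q hq
    rw [mem_range, Nat.lt_succ_iff]
    exact (mem_filter.1 hq).2 _ (headI_largest q).1

lemma coefSum_zero_right (n : ℕ) : coefSum n 0 = 0 := by
  refine sum_eq_zero fun p hp => absurd ?_ (lt_irrefl 0)
  exact p.parts_pos ((head?_plist_eq_some_iff p).1 (mem_filter.1 hp).2).1

lemma coefSum_eq_zero_of_lt {n k : ℕ} (h : n < k) : coefSum n k = 0 := by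
  refine sum_eq_zero fun p hp => absurd h (not_lt.2 ?_)
  exact Nat.Partition.le_of_mem_parts ((head?_plist_eq_some_iff p).1 (mem_filter.1 hp).2).1

lemma coefSum_self {k : ℕ} (hk : 1 ≤ k) : coefSum k k = 1 := by
  rw [coefSum_eq_sum_remove_largest hk le_rfl]
  generalize hm : k - k = m
  rw [Nat.sub_self] at hm
  subst hm
  simp [univ_unique, plist, coefw]

lemma sum_range_choose_succ_mul_choose (k M : ℕ) (hk : 1 ≤ k) :
    ∑ i ∈ range k, k.choose (i + 1) * M.choose i = (M + k).choose (k - 1) := by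
  rw [Nat.add_choose_eq, Nat.sum_antidiagonal_eq_sum_range_succ_mk, Nat.succ_eq_add_one,
    Nat.sub_add_cancel hk]
  refine sum_congr rfl fun i hi => ?_
  rw [mul_comm, ← Nat.choose_symm (by rw [mem_range] at hi; omega : i + 1 ≤ k)]
  congr 2
  omega

lemma coefSum_eq_choose {n k : ℕ} (hn : 1 ≤ n) (hk : 1 ≤ k) :
    coefSum n k = (n - 1).choose (k - 1) := by
  induction n using Nat.strong_induction_on generalizing k with
  | _ n ih =>
  rcases lt_trichotomy n k with hnk | rfl | hkn
  · rw [coefSum_eq_zero_of_lt hnk, Nat.choose_eq_zero_of_lt (by omega)]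
  · rw [coefSum_self hk, Nat.choose_self]
  · have hm : n - k ≠ 0 := by omega
    rw [coefSum_eq_sum_remove_largest hk hkn.le, sum_forall_le_eq_sum_coefSum hm,
      sum_range_succ', coefSum_zero_right, mul_zero, add_zero]
    calc ∑ i ∈ range k, k.choose (i + 1) * coefSum (n - k) (i + 1)
        = ∑ i ∈ range k, k.choose (i + 1) * (n - k - 1).choose i :=
          sum_congr rfl fun i _ => by rw [ih (n - k) (by omega) (by omega) (by omega)]; rfl
      _ = (n - 1).choose (k - 1) := by
          rw [sum_range_choose_succ_mul_choose k _ hk, show n - k - 1 + k = n - 1 by omega]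

theorem luschny_identity (n k : ℕ) (hn : 1 ≤ n) (hk : 1 ≤ k) :
    (∑ p ∈ Finset.univ.filter
        (fun p : n.Partition => (plist p).head? = some k), coefw (plist p)) =
      (n - 1).choose (k - 1) :=
  coefSum_eq_choose hn hk
end
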